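/- For a multivariate Gaussian distribution N(0, Σ) with Σ positive definite, a permutation π of {1,...,p}, and the upper Cholesky decomposition K^π = U^π D^π (U^π)^T of the permuted inverse covariance matrix K^π (where U^π is upper unitriangular and D^π positive diagonal), the entry U^π_{jk} (j < k) is zero if and only if the conditional covariance cov(X_{π(j)}, X_{π(k)} | X_S) is zero, where S = {π(1),...,π(k-1)} \ {π(j)}. -/

import Mathlib

/-!
Write `M = Σ^π`. From `M⁻¹ = U D Uᵀ` we get `Uᵀ M U D = 1`, and because `U` is upper triangular
this identity survives restriction to the leading block of positions `≤ k`. Hence the inverse of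
that block of `M` is `U_{≤k} D_{≤k} U_{≤k}ᵀ`, whose `(j, k)` entry is `U j k * d k`.
On the other hand, the leading block is, up to reordering, `Σ` on `S ∪ {π j, π k}`; by the Schur
complement formula the `{π j, π k}` corner of its inverse is the inverse of the `2 × 2`
conditional covariance matrix of `(X_{π j}, X_{π k})` given `X_S`, and an invertible `2 × 2`
matrix has a vanishing off-diagonal entry iff its inverse does.
-/

open Matrix

/-- the conditional covariance `cov(X_a, X_b | X_S)` of a Gaussian vector with
covariance matrix `Sig`, computed via the Schur complement:
`Σ_{ab} - Σ_{aS} (Σ_{SS})⁻¹ Σ_{Sb}`. -/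
noncomputable def condCov {p : ℕ} (Sig : Matrix (Fin p) (Fin p) ℝ)
    (a b : Fin p) (S : Finset (Fin p)) : ℝ :=
  Sig a b -
    (fun x : {x // x ∈ S} => Sig a x) ⬝ᵥ
      ((Sig.submatrix (fun x : {x // x ∈ S} => (x : Fin p))
          (fun x : {x // x ∈ S} => (x : Fin p)))⁻¹ *ᵥ
        fun y : {x // x ∈ S} => Sig (y : Fin p) b)

/-- the predecessors `{π 0, …, π (k-1)}` of position `k` in the ordering `π` -/
def predSet {p : ℕ} (π : Equiv.Perm (Fin p)) (k : Fin p) : Finset (Fin p) :=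
  (Finset.univ.filter (fun m => m < k)).image π


namespace Matrix

section LeadingBlock

variable {n R : Type*} [Fintype n] [LinearOrder n] [CommRing R]

theorem toBlock_mul_of_blockTriangular_right {M N : Matrix n n R} (hN : N.BlockTriangular id)
    (k : n) :
    (M * N).toBlock (· ≤ k) (· ≤ k) = M.toBlock (· ≤ k) (· ≤ k) * N.toBlock (· ≤ k) (· ≤ k) := by
  have hzero : N.toBlock (¬· ≤ k) (· ≤ k) = 0 := by
    ext i j
    exact hN (j.2.trans_lt (not_le.mp i.2))
  rw [toBlock_mul_eq_add _ (· ≤ k), hzero, Matrix.mul_zero, add_zero]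

theorem toBlock_mul_of_blockTriangular_transpose_left {M N : Matrix n n R}
    (hM : Mᵀ.BlockTriangular id) (k : n) :
    (M * N).toBlock (· ≤ k) (· ≤ k) = M.toBlock (· ≤ k) (· ≤ k) * N.toBlock (· ≤ k) (· ≤ k) := by
  have hzero : M.toBlock (· ≤ k) (¬· ≤ k) = 0 := by
    ext i j
    exact hM (i.2.trans_lt (not_le.mp j.2))
  rw [toBlock_mul_eq_add _ (· ≤ k), hzero, Matrix.zero_mul, add_zero]

theorem toBlock_mul_cholesky_eq_one [DecidableEq n] {M U : Matrix n n R} {d : n → R}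
    (hU : U.BlockTriangular id) (h : M * (U * diagonal d * Uᵀ) = 1) (k : n) :
    M.toBlock (· ≤ k) (· ≤ k) * (U.toBlock (· ≤ k) (· ≤ k) *
      diagonal (fun i : {i // i ≤ k} => d i) * Uᵀ.toBlock (· ≤ k) (· ≤ k)) = 1 := by
  have hfull : Uᵀ * M * U * diagonal d = 1 := by
    have h' : M * U * diagonal d * Uᵀ = 1 := by simpa only [Matrix.mul_assoc] using h
    simpa only [Matrix.mul_assoc] using mul_eq_one_comm.mp h'
  have hblock := congrArg (toBlock · (· ≤ k) (· ≤ k)) hfull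
  rw [toBlock_mul_of_blockTriangular_right (blockTriangular_diagonal d),
    toBlock_mul_of_blockTriangular_right hU,
    toBlock_mul_of_blockTriangular_transpose_left (by rwa [transpose_transpose]),
    toBlock_diagonal_self, toBlock_one_self, Matrix.mul_assoc, Matrix.mul_assoc,
    mul_eq_one_comm] at hblock
  simpa only [Matrix.mul_assoc] using hblock

theorem cholesky_toBlock_apply_last [DecidableEq n] {U : Matrix n n R} {d : n → R}
    (hU : U.BlockTriangular id) (hU1 : ∀ i, U i i = 1) {j k : n} (hjk : j ≤ k) :
    (U.toBlock (· ≤ k) (· ≤ k) * diagonal (fun i : {i // i ≤ k} => d i) *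
      Uᵀ.toBlock (· ≤ k) (· ≤ k)) ⟨j, hjk⟩ ⟨k, le_rfl⟩ = U j k * d k := by
  rw [mul_apply, Fintype.sum_eq_single ⟨k, le_rfl⟩]
  · simp [hU1]
  · intro a ha
    have hak : (a : n) < k := lt_of_le_of_ne a.2 (fun h => ha (Subtype.ext h))
    simp [hU hak]

end LeadingBlock

section SchurComplement

variable {m K : Type*} [Fintype m] [DecidableEq m] [Field K]

theorem inv_apply_zero_one_eq_zero_iff {C : Matrix (Fin 2) (Fin 2) K} (hC : IsUnit C.det) :
    C⁻¹ 0 1 = 0 ↔ C 0 1 = 0 := by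
  simp [inv_def, adjugate_fin_two, hC.ne_zero]

/-- The bottom-right block of `M⁻¹` is the inverse of the Schur complement of the top-left
block. -/
theorem inv_apply_inr_eq_zero_iff_schur {M : Matrix (m ⊕ Fin 2) (m ⊕ Fin 2) K}
    (hM : IsUnit M.det) (h₁₁ : IsUnit M.toBlocks₁₁.det) :
    M⁻¹ (.inr 0) (.inr 1) = 0 ↔
      (M.toBlocks₂₂ - M.toBlocks₂₁ * M.toBlocks₁₁⁻¹ * M.toBlocks₁₂) 0 1 = 0 := by
  obtain ⟨A, B, C, D, rfl⟩ : ∃ A B C D, M = fromBlocks A B C D :=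
    ⟨_, _, _, _, (fromBlocks_toBlocks M).symm⟩
  simp only [toBlocks_fromBlocks₁₁, toBlocks_fromBlocks₁₂, toBlocks_fromBlocks₂₁,
    toBlocks_fromBlocks₂₂] at h₁₁ ⊢
  let := A.invertibleOfIsUnitDet h₁₁
  let := (fromBlocks A B C D).invertibleOfIsUnitDet hM
  let := invertibleOfFromBlocks₁₁Invertible A B C D
  have hinv : (fromBlocks A B C D)⁻¹ (.inr 0) (.inr 1) = (D - C * A⁻¹ * B)⁻¹ 0 1 := by
    rw [← invOf_eq_nonsing_inv, invOf_fromBlocks₁₁_eq]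
    simp [invOf_eq_nonsing_inv]
  rw [hinv, inv_apply_zero_one_eq_zero_iff]
  simpa [invOf_eq_nonsing_inv] using isUnit_det_of_invertible (D - C * ⅟A * B)

end SchurComplement

end Matrix

/-- The indices `S` followed by `a, b`: in this order `condCov Sig a b S` is the `(0, 1)` entry of
the Schur complement of the `S`-block. -/
def condIndex {p : ℕ} (S : Finset (Fin p)) (a b : Fin p) : S ⊕ Fin 2 → Fin p :=
  Sum.elim (↑) ![a, b]

theorem condCov_eq_zero_iff_inv_apply_eq_zero {p : ℕ} {Sig : Matrix (Fin p) (Fin p) ℝ}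
    (hSig : Sig.PosDef) {a b : Fin p} {S : Finset (Fin p)}
    (hf : Function.Injective (condIndex S a b)) :
    condCov Sig a b S = 0 ↔
      (Sig.submatrix (condIndex S a b) (condIndex S a b))⁻¹ (.inr 0) (.inr 1) = 0 := by
  rw [inv_apply_inr_eq_zero_iff_schur (hSig.submatrix hf).det_pos.ne'.isUnit
    (hSig.submatrix Subtype.val_injective).det_pos.ne'.isUnit]
  simp [condCov, condIndex, Matrix.mul_assoc, mul_apply, dotProduct, mulVec, submatrix,
    toBlocks₁₁, toBlocks₁₂, toBlocks₂₁, toBlocks₂₂]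

theorem mem_predSet_erase {p : ℕ} {π : Equiv.Perm (Fin p)} {j k x : Fin p} :
    x ∈ (predSet π k).erase (π j) ↔ π.symm x < k ∧ π.symm x ≠ j := by
  rw [Finset.mem_erase, predSet, Finset.mem_image]
  constructor
  · rintro ⟨hx, m, hm, rfl⟩
    simp_all
  · rintro ⟨hk, hj⟩
    exact ⟨fun h => hj (by simp [h]), π.symm x, by simpa using hk, by simp⟩

theorem exists_equiv_condIndex_predSet {p : ℕ} (π : Equiv.Perm (Fin p)) {j k : Fin p}
    (hjk : j < k) :
    ∃ e : (predSet π k).erase (π j) ⊕ Fin 2 ≃ {i // i ≤ k},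
      condIndex ((predSet π k).erase (π j)) (π j) (π k) = π ∘ Subtype.val ∘ e := by
  let g : (predSet π k).erase (π j) ⊕ Fin 2 → {i // i ≤ k} :=
    Sum.elim (fun s => ⟨π.symm s, (mem_predSet_erase.1 s.2).1.le⟩) ![⟨j, hjk.le⟩, ⟨k, le_rfl⟩]
  have hinj : g.Injective := by
    refine Function.Injective.sumElim ?_ ?_ ?_
    · intro s t h
      exact Subtype.ext (π.symm.injective (congrArg Subtype.val h))
    · intro i i' h
      fin_cases i <;> fin_cases i' <;> simp_all [hjk.ne, hjk.ne']
    · intro s i h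
      have hs := mem_predSet_erase.1 s.2
      fin_cases i <;> simp_all [Subtype.ext_iff]
  have hsurj : g.Surjective := by
    rintro ⟨t, ht⟩
    rcases ht.lt_or_eq with htk | rfl
    · by_cases htj : t = j
      · exact ⟨.inr 0, by simp [g, htj]⟩
      · exact ⟨.inl ⟨π t, mem_predSet_erase.2 (by simp [htk, htj])⟩, by simp [g]⟩
    · exact ⟨.inr 1, by simp [g]⟩
  refine ⟨Equiv.ofBijective g ⟨hinj, hsurj⟩, funext ?_⟩
  rintro (s | i)
  · exact (π.apply_symm_apply s).symm
  · fin_cases i <;> rfl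

/-- For a Gaussian `N(0, Σ)` with `Σ` positive definite, a permutation `π`, and the
upper Cholesky decomposition `K^π = U D Uᵀ` of the permuted inverse covariance
matrix `K^π = (Σ⁻¹)^π`, the entry `U j k` (for `j < k`) vanishes iff the
conditional covariance `cov(X_{π j}, X_{π k} | X_S)` vanishes, where
`S = {π 0, …, π (k-1)} \ {π j}`. -/
theorem cholesky_zero_iff_condCov_zero {p : ℕ} (Sig : Matrix (Fin p) (Fin p) ℝ)
    (hSig : Sig.PosDef) (π : Equiv.Perm (Fin p))
    (U : Matrix (Fin p) (Fin p) ℝ) (d : Fin p → ℝ)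
    (hU : U.BlockTriangular id) (hU1 : ∀ i, U i i = 1) (hd : ∀ i, 0 < d i)
    (hfac : (Sig⁻¹).submatrix π π = U * Matrix.diagonal d * Uᵀ) :
    ∀ j k : Fin p, j < k →
      (U j k = 0 ↔ condCov Sig (π j) (π k) ((predSet π k).erase (π j)) = 0) := by
  intro j k hjk
  obtain ⟨e, he⟩ := exists_equiv_condIndex_predSet π hjk
  set M := Sig.submatrix π π
  have hM : M * (U * diagonal d * Uᵀ) = 1 := by
    rw [← hfac, ← inv_submatrix_equiv]
    exact mul_nonsing_inv _ (hSig.submatrix π.injective).det_pos.ne'.isUnit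
  have hblock : (M.toBlock (· ≤ k) (· ≤ k))⁻¹ ⟨j, hjk.le⟩ ⟨k, le_rfl⟩ = U j k * d k := by
    rw [inv_eq_right_inv (toBlock_mul_cholesky_eq_one hU hM k), cholesky_toBlock_apply_last hU hU1]
  have hej : e (.inr 0) = ⟨j, hjk.le⟩ := Subtype.ext (π.injective (congrFun he (.inr 0)).symm)
  have hek : e (.inr 1) = ⟨k, le_rfl⟩ := Subtype.ext (π.injective (congrFun he (.inr 1)).symm)
  have hsub : Sig.submatrix (π ∘ Subtype.val ∘ e) (π ∘ Subtype.val ∘ e) =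
      (M.toBlock (· ≤ k) (· ≤ k)).submatrix e e := rfl
  rw [condCov_eq_zero_iff_inv_apply_eq_zero hSig
      (he ▸ π.injective.comp (Subtype.val_injective.comp e.injective)),
    he, hsub, inv_submatrix_equiv, submatrix_apply, hej, hek, hblock]
  exact (mul_eq_zero_iff_right (hd k).ne').symm
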